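/- arXiv:1303.4665 — 5 statements merged into one kernel-verified Lean document; each statement's English description precedes it below -/
import Mathlib

section
/- Let (A, L, ⁅·,·⁆, θ) be a Lie–Rinehart algebra over a commutative ring R. Then the CCE operator preserves A-multilinearity: for every A-multilinear alternating n-form f : Lⁿ → A, the (n+1)-form df is again A-multilinear, i.e., for every index i, every a ∈ A, and all x_1,…,x_{n+1} ∈ L, (df)(x_1,…,a·x_i,…,x_{n+1}) = a·(df)(x_1,…,x_{n+1}). -/
section aux
variable {R A L : Type*} [CommRing R] [CommRing A] [Algebra R A]
  [AddCommGroup L] [Module R L]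

lemma val_succAbove' {n : ℕ} (p : Fin (n + 1)) (t : Fin n) :
    ((p.succAbove t : Fin (n + 1)) : ℕ) = if (t : ℕ) < (p : ℕ) then (t : ℕ) else (t : ℕ) + 1 := by
  rcases lt_or_ge ((t : ℕ)) ((p : ℕ)) with h | h
  · rw [if_pos h, Fin.succAbove_of_castSucc_lt _ _ (by simpa [Fin.lt_def] using h)]
    rfl
  · rw [if_neg (not_lt.2 h), Fin.succAbove_of_le_castSucc _ _ (by simpa [Fin.le_def] using h)]
    rfl

lemma alt_update_eq_cons {m : ℕ} (f : AlternatingMap R L A (Fin (m + 1)))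
    (v : Fin (m + 1) → L) (p : Fin (m + 1)) (z : L) :
    f (Function.update v p z) = (-1 : ℤ) ^ (p : ℕ) • f (Fin.cons z (v ∘ p.succAbove)) := by
  have h : Function.update v p z
      = (Fin.cons z (v ∘ p.succAbove) : Fin (m + 1) → L) ∘ ⇑(p.cycleRange) := by
    funext s
    by_cases hs : s = p
    · subst hs
      simp [Fin.cycleRange_self]
    · obtain ⟨t, rfl⟩ := Fin.exists_succAbove_eq hs
      simp [Function.update_of_ne hs]
  rw [h, AlternatingMap.map_perm, Fin.sign_cycleRange]
  simp [Units.smul_def]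

lemma alt_update_succAbove_sign {n : ℕ} (f : AlternatingMap R L A (Fin n))
    (x : Fin (n + 1) → L) (k i : Fin (n + 1)) (hki : (k : ℕ) < (i : ℕ))
    (k' : Fin n) (hk' : i.succAbove k' = k) :
    (-1 : ℤ) ^ (i : ℕ) • f (Function.update (x ∘ i.succAbove) k' (x i)) =
      -((-1 : ℤ) ^ (k : ℕ) • f (x ∘ k.succAbove)) := by
  cases n with
  | zero => omega
  | succ m =>
    have hiv := i.isLt
    have hkv := k.isLt
    have hk'v : (k' : ℕ) = (k : ℕ) := by
      have h := val_succAbove' i k'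
      rw [hk'] at h
      split_ifs at h <;> omega
    set p : Fin (m + 1) := ⟨(i : ℕ) - 1, by omega⟩ with hp
    have hpv : k.succAbove p = i := by
      apply Fin.ext
      rw [val_succAbove']
      split_ifs with h <;> simp [hp] at h ⊢ <;> omega
    have hcomp : (x ∘ i.succAbove) ∘ k'.succAbove = (x ∘ k.succAbove) ∘ p.succAbove := by
      funext t
      have htv := t.isLt
      simp only [Function.comp_apply]
      congr 1
      apply Fin.ext
      simp only [val_succAbove', hp]
      split_ifs <;> omega
    have e1 := alt_update_eq_cons f (x ∘ i.succAbove) k' (x i)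
    have e2 : f (x ∘ k.succAbove)
        = (-1 : ℤ) ^ ((i : ℕ) - 1) • f (Fin.cons (x i) ((x ∘ k.succAbove) ∘ p.succAbove)) := by
      have e3 := alt_update_eq_cons f (x ∘ k.succAbove) p (x i)
      have h4 : Function.update (x ∘ k.succAbove) p (x i) = x ∘ k.succAbove := by
        have h5 : (x ∘ k.succAbove) p = x i := by rw [Function.comp_apply, hpv]
        rw [← h5, Function.update_eq_self]
      rw [h4] at e3
      exact e3
    rw [e1, hk'v, hcomp, e2, smul_smul, smul_smul, ← neg_smul]
    congr 1
    obtain ⟨I, hI⟩ : ∃ I, (i : ℕ) = I + 1 := ⟨(i : ℕ) - 1, by omega⟩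
    rw [hI]
    simp only [Nat.add_sub_cancel]
    ring

end aux

/-- The Cartan–Chevalley–Eilenberg operator, evaluated pointwise.  For an alternating
`n`-form `f`, `cce θ br f` is the `(n+1)`-form
`(df)(x₁,…,x_{n+1}) = Σᵢ (−1)^{i+1} θ(xᵢ)(f(x₁,…,x̂ᵢ,…)) + Σ_{i<j} (−1)^{i+j} f(⁅xᵢ,xⱼ⁆, …,x̂ᵢ,…,x̂ⱼ,…)`
(1-based indices).  The second sum is encoded by replacing the entry at slot `i` by the
bracket and deleting slot `j`; for alternating `f` moving the bracket entry from slot `i`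
to the front costs `(-1)^i` (0-based), which accounts for the sign `(-1)^j` below. -/
noncomputable def cce {R A L : Type*} [CommRing R] [CommRing A] [Algebra R A]
    (θ : L → Derivation R A A) (br : L → L → L)
    {n : ℕ} (f : (Fin n → L) → A) (x : Fin (n + 1) → L) : A :=
  (∑ i : Fin (n + 1), (-1 : ℤ) ^ (i : ℕ) • θ (x i) (f (x ∘ i.succAbove)))
    + ∑ i : Fin (n + 1), ∑ j : Fin (n + 1),
        if (i : ℕ) < (j : ℕ) then
          (-1 : ℤ) ^ (j : ℕ) • f (Function.update x i (br (x i) (x j)) ∘ j.succAbove)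
        else 0

/-- For a Lie–Rinehart algebra `(A, L, ⁅·,·⁆, θ)`, the CCE operator preserves
`A`-multilinearity of alternating forms. -/
theorem cce_preserves_A_multilinear {R A L : Type*} [CommRing R] [CommRing A] [Algebra R A]
    [LieRing L] [LieAlgebra R L] [Module A L] [IsScalarTower R A L]
    (θ : L →ₗ[R] Derivation R A A)
    (hθbr : ∀ x y : L, θ ⁅x, y⁆ = ⁅θ x, θ y⁆)
    (hθA : ∀ (a : A) (α : L) (b : A), θ (a • α) b = a * θ α b)
    (hLR : ∀ (α β : L) (a : A), ⁅α, a • β⁆ = a • ⁅α, β⁆ + θ α a • β)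
    (n : ℕ) (f : AlternatingMap R L A (Fin n))
    (hf : ∀ (x : Fin n → L) (i : Fin n) (a : A),
        f (Function.update x i (a • x i)) = a * f x)
    (x : Fin (n + 1) → L) (i : Fin (n + 1)) (a : A) :
    cce (fun z => θ z) (fun u v => ⁅u, v⁆) (⇑f) (Function.update x i (a • x i)) =
      a * cce (fun z => θ z) (fun u v => ⁅u, v⁆) (⇑f) x := by
  classical
  set y : Fin (n + 1) → L := Function.update x i (a • x i) with hy
  have hyi : y i = a • x i := Function.update_self _ _ _
  have hyne : ∀ {k : Fin (n + 1)}, k ≠ i → y k = x k :=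
    fun h => Function.update_of_ne h _ _
  have hfs : ∀ (v : Fin n → L) (q : Fin n) (b : A) (c : L),
      f (Function.update v q (b • c)) = b * f (Function.update v q c) := by
    intro v q b c
    have h := hf (Function.update v q c) q b
    rwa [Function.update_self, Function.update_idem] at h
  set T : Fin (n + 1) → A :=
    fun k => (-1 : ℤ) ^ (k : ℕ) • (θ (x k) a * f (x ∘ k.succAbove)) with hT
  set E1 : Fin (n + 1) → A := fun k => if k = i then 0 else T k with hE1
  set E2 : Fin (n + 1) → Fin (n + 1) → A := fun k j =>
    if (k : ℕ) < (j : ℕ) then (if k = i then -T j else if j = i then -T k else 0) else 0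
    with hE2
  -- key1
  have key1 : ∀ k : Fin (n + 1),
      (-1 : ℤ) ^ (k : ℕ) • θ (y k) (f (y ∘ k.succAbove)) =
        a * ((-1 : ℤ) ^ (k : ℕ) • θ (x k) (f (x ∘ k.succAbove))) + E1 k := by
    intro k
    by_cases hk : k = i
    · subst hk
      have h1 : y ∘ k.succAbove = x ∘ k.succAbove := by
        funext m
        exact Function.update_of_ne (Fin.succAbove_ne k m) _ _
      rw [h1, hyi, hθA, mul_smul_comm]
      simp [hE1]
    · obtain ⟨t, ht⟩ := Fin.exists_succAbove_eq (show i ≠ k from fun h => hk h.symm)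
      have h1 : y ∘ k.succAbove
          = Function.update (x ∘ k.succAbove) t (a • (x ∘ k.succAbove) t) := by
        rw [hy, ← ht]
        exact Function.update_comp_eq_of_injective x Fin.succAbove_right_injective t _
      have h2 : f (y ∘ k.succAbove) = a * f (x ∘ k.succAbove) := by rw [h1, hf]
      rw [hyne hk, h2, Derivation.leibniz, smul_eq_mul, smul_eq_mul, smul_add,
        mul_smul_comm]
      have hE1k : E1 k = T k := by simp [hE1, hk]
      rw [hE1k, hT]
      simp [mul_comm]
  -- key2
  have key2 : ∀ k j : Fin (n + 1),
      (if (k : ℕ) < (j : ℕ) then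
          (-1 : ℤ) ^ (j : ℕ) • f (Function.update y k ⁅y k, y j⁆ ∘ j.succAbove) else 0) =
        a * (if (k : ℕ) < (j : ℕ) then
          (-1 : ℤ) ^ (j : ℕ) • f (Function.update x k ⁅x k, x j⁆ ∘ j.succAbove) else 0)
          + E2 k j := by
    intro k j
    by_cases hlt : (k : ℕ) < (j : ℕ)
    · rw [if_pos hlt, if_pos hlt]
      by_cases hki : k = i
      · -- case A : k = i < j
        subst hki
        have hji : j ≠ k := fun h => by rw [h] at hlt; omega
        have hyj : y j = x j := hyne hji
        have hin : (k : ℕ) < n := by have := j.isLt; omega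
        set t : Fin n := ⟨(k : ℕ), hin⟩ with htdef
        have ht : j.succAbove t = k := by
          apply Fin.ext
          rw [val_succAbove']
          simp [htdef, hlt]
        have hbr : ⁅a • x k, x j⁆ = a • ⁅x k, x j⁆ - θ (x j) a • x k := by
          rw [← lie_skew (a • x k) (x j), hLR, ← lie_skew (x j) (x k)]
          module
        have htuple : Function.update y k ⁅y k, y j⁆ ∘ j.succAbove
            = Function.update (x ∘ j.succAbove) t ⁅a • x k, x j⁆ := by
          rw [hyi, hyj, hy, Function.update_idem, ← ht]
          exact Function.update_comp_eq_of_injective x Fin.succAbove_right_injective t _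
        have hXt : (x ∘ j.succAbove) t = x k := by rw [Function.comp_apply, ht]
        have hc1 : Function.update x k ⁅x k, x j⁆ ∘ j.succAbove
            = Function.update (x ∘ j.succAbove) t ⁅x k, x j⁆ := by
          rw [← ht]
          exact Function.update_comp_eq_of_injective x Fin.succAbove_right_injective t _
        have hsplit : f (Function.update (x ∘ j.succAbove) t ⁅a • x k, x j⁆)
            = a * f (Function.update x k ⁅x k, x j⁆ ∘ j.succAbove)
              - θ (x j) a * f (x ∘ j.succAbove) := by
          rw [hbr, AlternatingMap.map_update_sub, hfs, hfs, hc1]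
          congr 2
          rw [← hXt, Function.update_eq_self]
        have hE2v : E2 k j = -T j := by
          simp only [hE2]
          rw [if_pos hlt]
          simp
        rw [htuple, hsplit, hE2v, hT]
        simp only [zsmul_eq_mul]
        push_cast
        ring
      · by_cases hji : j = i
        · -- case B : k < j = i
          subst hji
          have hki' : j ≠ k := fun h => by rw [h] at hlt; omega
          have hyk : y k = x k := hyne hki
          have hkn : (k : ℕ) < n := by have := j.isLt; omega
          set t : Fin n := ⟨(k : ℕ), hkn⟩ with htdef
          have ht : j.succAbove t = k := by
            apply Fin.ext
            rw [val_succAbove']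
            simp [htdef, hlt]
          have hbr : ⁅x k, a • x j⁆ = a • ⁅x k, x j⁆ + θ (x k) a • x j := hLR _ _ _
          have htuple : Function.update y k ⁅y k, y j⁆ ∘ j.succAbove
              = Function.update (x ∘ j.succAbove) t ⁅x k, a • x j⁆ := by
            rw [hyk, hyi, hy, Function.update_comm hki',
              Function.update_comp_eq_of_forall_ne _ _ (fun m => Fin.succAbove_ne j m),
              ← ht]
            exact Function.update_comp_eq_of_injective x Fin.succAbove_right_injective t _
          have hc1 : Function.update x k ⁅x k, x j⁆ ∘ j.succAbove
              = Function.update (x ∘ j.succAbove) t ⁅x k, x j⁆ := by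
            rw [← ht]
            exact Function.update_comp_eq_of_injective x Fin.succAbove_right_injective t _
          have hsplit : f (Function.update (x ∘ j.succAbove) t ⁅x k, a • x j⁆)
              = a * f (Function.update x k ⁅x k, x j⁆ ∘ j.succAbove)
                + θ (x k) a * f (Function.update (x ∘ j.succAbove) t (x j)) := by
            rw [hbr, AlternatingMap.map_update_add, hfs, hfs, hc1]
          have hsgn := alt_update_succAbove_sign (R := R) (A := A) f x k j hlt t ht
          have hE2v : E2 k j = -T k := by
            simp only [hE2]
            rw [if_pos hlt, if_neg hki]
            simp
          rw [htuple, hsplit, hE2v, hT]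
          simp only [zsmul_eq_mul] at hsgn ⊢
          push_cast at hsgn ⊢
          linear_combination θ (x k) a * hsgn
        · -- case C : generic
          have hik : i ≠ k := fun h => hki h.symm
          have hij : i ≠ j := fun h => hji h.symm
          obtain ⟨t, ht⟩ := Fin.exists_succAbove_eq hij
          have hXi : (Function.update x k ⁅x k, x j⁆ ∘ j.succAbove) t = x i := by
            rw [Function.comp_apply, ht, Function.update_of_ne hik]
          have htuple : Function.update y k ⁅y k, y j⁆ ∘ j.succAbove
              = Function.update (Function.update x k ⁅x k, x j⁆ ∘ j.succAbove) t
                  (a • (Function.update x k ⁅x k, x j⁆ ∘ j.succAbove) t) := by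
            rw [hyne hki, hyne hji, hy, Function.update_comm hik, ← hXi, ← ht]
            exact Function.update_comp_eq_of_injective _
              Fin.succAbove_right_injective t _
          have h2 : f (Function.update y k ⁅y k, y j⁆ ∘ j.succAbove)
              = a * f (Function.update x k ⁅x k, x j⁆ ∘ j.succAbove) := by
            rw [htuple, hf]
          have hE2v : E2 k j = 0 := by
            simp only [hE2]
            rw [if_pos hlt, if_neg hki, if_neg hji]
          rw [h2, hE2v, mul_smul_comm, add_zero]
    · rw [if_neg hlt, if_neg hlt]
      have hE2v : E2 k j = 0 := by
        simp only [hE2]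
        rw [if_neg hlt]
      rw [hE2v]
      ring
  -- sums
  have hsum1 : (∑ k : Fin (n + 1), (-1 : ℤ) ^ (k : ℕ) • θ (y k) (f (y ∘ k.succAbove)))
      = a * (∑ k : Fin (n + 1), (-1 : ℤ) ^ (k : ℕ) • θ (x k) (f (x ∘ k.succAbove)))
        + ∑ k : Fin (n + 1), E1 k := by
    rw [Finset.mul_sum, ← Finset.sum_add_distrib]
    exact Finset.sum_congr rfl fun k _ => key1 k
  have hsum2 : (∑ k : Fin (n + 1), ∑ j : Fin (n + 1),
        if (k : ℕ) < (j : ℕ) then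
          (-1 : ℤ) ^ (j : ℕ) • f (Function.update y k ⁅y k, y j⁆ ∘ j.succAbove) else 0)
      = a * (∑ k : Fin (n + 1), ∑ j : Fin (n + 1),
          if (k : ℕ) < (j : ℕ) then
            (-1 : ℤ) ^ (j : ℕ) • f (Function.update x k ⁅x k, x j⁆ ∘ j.succAbove) else 0)
        + ∑ k : Fin (n + 1), ∑ j : Fin (n + 1), E2 k j := by
    rw [Finset.mul_sum, ← Finset.sum_add_distrib]
    refine Finset.sum_congr rfl fun k _ => ?_
    rw [Finset.mul_sum, ← Finset.sum_add_distrib]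
    exact Finset.sum_congr rfl fun j _ => key2 k j
  -- the error terms cancel
  have hE2split : ∀ k j : Fin (n + 1), E2 k j
      = (if k = i then (if (i : ℕ) < (j : ℕ) then -T j else 0) else 0)
        + (if j = i then (if (k : ℕ) < (i : ℕ) then -T k else 0) else 0) := by
    intro k j
    simp only [hE2]
    by_cases hk : k = i
    · subst hk
      by_cases hj : j = k
      · subst hj
        simp
      · simp [hj]
    · by_cases hj : j = i
      · subst hj
        simp [hk]
      · simp [hk, hj]
  have hE2sum : (∑ k : Fin (n + 1), ∑ j : Fin (n + 1), E2 k j)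
      = (∑ j : Fin (n + 1), if (i : ℕ) < (j : ℕ) then -T j else 0)
        + ∑ k : Fin (n + 1), if (k : ℕ) < (i : ℕ) then -T k else 0 := by
    have h1 : ∀ k : Fin (n + 1), (∑ j : Fin (n + 1), E2 k j)
        = (if k = i then (∑ j : Fin (n + 1), if (i : ℕ) < (j : ℕ) then -T j else 0) else 0)
          + (if (k : ℕ) < (i : ℕ) then -T k else 0) := by
      intro k
      rw [show (∑ j : Fin (n + 1), E2 k j) = ∑ j : Fin (n + 1),
          ((if k = i then (if (i : ℕ) < (j : ℕ) then -T j else 0) else 0)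
            + (if j = i then (if (k : ℕ) < (i : ℕ) then -T k else 0) else 0))
        from Finset.sum_congr rfl fun j _ => hE2split k j]
      rw [Finset.sum_add_distrib]
      congr 1
      · by_cases hk : k = i
        · simp [hk]
        · simp [hk]
      · simp
    rw [Finset.sum_congr rfl fun k _ => h1 k, Finset.sum_add_distrib]
    congr 1
    simp
  have hE1split : ∀ k : Fin (n + 1), E1 k
      = (if (i : ℕ) < (k : ℕ) then T k else 0) + (if (k : ℕ) < (i : ℕ) then T k else 0) := by
    intro k
    simp only [hE1]
    by_cases hk : k = i
    · subst hk
      simp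
    · have hv : (k : ℕ) ≠ (i : ℕ) := fun h => hk (Fin.ext h)
      rw [if_neg hk]
      rcases Nat.lt_or_ge (i : ℕ) (k : ℕ) with h | h
      · rw [if_pos h, if_neg (by omega)]
        ring
      · rw [if_neg (by omega), if_pos (by omega)]
        ring
  have hE : (∑ k : Fin (n + 1), E1 k) + (∑ k : Fin (n + 1), ∑ j : Fin (n + 1), E2 k j) = 0 := by
    rw [hE2sum, Finset.sum_congr rfl fun k _ => hE1split k, Finset.sum_add_distrib]
    have hz1 : (∑ k : Fin (n + 1), if (i : ℕ) < (k : ℕ) then T k else 0)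
        + (∑ j : Fin (n + 1), if (i : ℕ) < (j : ℕ) then -T j else 0) = 0 := by
      rw [← Finset.sum_add_distrib]
      apply Finset.sum_eq_zero
      intro k _
      split_ifs <;> ring
    have hz2 : (∑ k : Fin (n + 1), if (k : ℕ) < (i : ℕ) then T k else 0)
        + (∑ k : Fin (n + 1), if (k : ℕ) < (i : ℕ) then -T k else 0) = 0 := by
      rw [← Finset.sum_add_distrib]
      apply Finset.sum_eq_zero
      intro k _
      split_ifs <;> ring
    linear_combination hz1 + hz2
  simp only [cce]
  rw [hsum1, hsum2]
  linear_combination hE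
end

section
/- Let R be a commutative ring, A a commutative R-algebra, L an R-module with an R-bilinear alternating bracket ⁅·,·⁆ (not assumed to satisfy the Jacobi identity), and θ : L → Der_R(A) an R-linear map that is compatible with the brackets, i.e., θ(⁅x,y⁆) = ⁅θ(x),θ(y)⁆ (commutator of derivations) for all x, y ∈ L. Then for every R-linear map φ : L → A and all x, y, z ∈ L, the twice-iterated CCE operator evaluates to the Jacobiator: (d(dφ))(x,y,z) = φ(⁅⁅x,y⁆,z⁆ + ⁅⁅y,z⁆,x⁆ + ⁅⁅z,x⁆,y⁆). -/
/-!
Evaluating `d` on a `1`-form and on a `2`-form at explicit vectors gives the classical three- and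
six-term formulas. Substituting the first into the second, the terms with a single derivation
cancel in pairs, those with two derivations cancel because `θ` sends brackets to commutators, and
what is left is `φ` of `⁅⁅x,y⁆,z⁆ - ⁅⁅x,z⁆,y⁆ - ⁅x,⁅y,z⁆⁆`, which is the Jacobiator by
antisymmetry of the bracket.
-/

section

variable {R A L : Type*} [CommRing R] [CommRing A] [Algebra R A]
  (θ : L → Derivation R A A) (br : L → L → L)

theorem cce_apply_fin_two (f : (Fin 1 → L) → A) (x y : L) :
    cce θ br f ![x, y] = θ x (f ![y]) - θ y (f ![x]) - f ![br x y] := by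
  have h₀ : ![x, y] ∘ Fin.succ = ![y] := rfl
  have h₁ : ![x, y] ∘ Fin.succAbove 1 = ![x] := by ext i; fin_cases i; rfl
  have h₂ : Function.update ![x, y] 0 (br x y) ∘ Fin.succAbove 1 = ![br x y] := by
    ext i; fin_cases i; rfl
  simp [cce, Fin.sum_univ_succ, h₀, h₁, h₂, sub_eq_add_neg]

theorem cce_apply_fin_three (f : (Fin 2 → L) → A) (x y z : L) :
    cce θ br f ![x, y, z] = θ x (f ![y, z]) - θ y (f ![x, z]) + θ z (f ![x, y])
      - f ![br x y, z] + f ![br x z, y] + f ![x, br y z] := by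
  have h₀ : ![x, y, z] ∘ Fin.succ = ![y, z] := rfl
  have h₁ : ![x, y, z] ∘ Fin.succAbove 1 = ![x, z] := by ext i; fin_cases i <;> rfl
  have h₂ : ![x, y, z] ∘ Fin.succAbove 2 = ![x, y] := by ext i; fin_cases i <;> rfl
  have h₀₁ : Function.update ![x, y, z] 0 (br x y) ∘ Fin.succAbove 1 = ![br x y, z] := by
    ext i; fin_cases i <;> rfl
  have h₀₂ : Function.update ![x, y, z] 0 (br x z) ∘ Fin.succAbove 2 = ![br x z, y] := by
    ext i; fin_cases i <;> rfl
  have h₁₂ : Function.update ![x, y, z] 1 (br y z) ∘ Fin.succAbove 2 = ![x, br y z] := by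
    ext i; fin_cases i <;> rfl
  simp [cce, Fin.sum_univ_succ, h₀, h₁, h₂, h₀₁, h₀₂, h₁₂, sub_eq_add_neg, add_assoc]

end

/-- For an `R`-bilinear alternating bracket (not assumed to satisfy the Jacobi identity)
and an `R`-linear `θ : L → Der_R(A)` compatible with the brackets, the twice iterated CCE
operator on an `R`-linear `φ : L → A` evaluates to `φ` of the Jacobiator. -/
theorem cce_cce_eq_jacobiator {R A L : Type*} [CommRing R] [CommRing A] [Algebra R A]
    [AddCommGroup L] [Module R L]
    (br : L →ₗ[R] L →ₗ[R] L) (hbr : ∀ x : L, br x x = 0)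
    (θ : L →ₗ[R] Derivation R A A)
    (hθ : ∀ x y : L, θ (br x y) = ⁅θ x, θ y⁆)
    (φ : L →ₗ[R] A) (x y z : L) :
    cce (fun w => θ w) (fun u v => br u v)
        (cce (fun w => θ w) (fun u v => br u v) (fun t : Fin 1 → L => φ (t 0)))
        ![x, y, z] =
      φ (br (br x y) z + br (br y z) x + br (br z x) y) := by
  simp only [cce_apply_fin_three, cce_apply_fin_two, Matrix.cons_val_zero, hθ,
    Derivation.commutator_apply, map_sub]
  rw [← LinearMap.IsAlt.neg hbr x z, ← LinearMap.IsAlt.neg hbr x (br y z)]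
  simp only [map_neg, map_add, LinearMap.neg_apply]
  abel
end

section
/- Let R be a commutative ring, A a commutative R-algebra, L an A-module with an R-bilinear alternating bracket ⁅·,·⁆, and θ : L → Der_R(A) an R-linear map with θ(aα) = a·θ(α) for all a ∈ A, α ∈ L. Suppose the canonical double-dual map L → Hom_A(Hom_A(L,A), A) is injective, and suppose that for every A-linear φ : L → A the 2-form dφ, (dφ)(α,β) = θ(α)(φ(β)) − θ(β)(φ(α)) − φ(⁅α,β⁆), is A-linear in the second argument: (dφ)(α, aβ) = a·(dφ)(α,β) for all α, β ∈ L, a ∈ A. Then the Lie–Rinehart axiom holds: ⁅α, aβ⁆ = a⁅α,β⁆ + θ(α)(a)·β for all α, β ∈ L and a ∈ A. -/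
/-!
Since `L` embeds into its double dual, it suffices to test the Lie–Rinehart identity against every
`φ : L →ₗ[A] A`. Expanding `dφ(α, aβ) = a · dφ(α, β)` with the Leibniz rule
`θ(α)(a φ(β)) = a θ(α)(φ(β)) + θ(α)(a) φ(β)` and with `θ(aβ) = a θ(β)` leaves exactly
`φ ⁅α, aβ⁆ = a φ ⁅α, β⁆ + θ(α)(a) φ(β)`.
-/

section

variable {R A L : Type*} [CommRing R] [CommRing A] [Algebra R A]
  [AddCommGroup L] [Module R L] [Module A L]

theorem dual_apply_bracket_smul_right (br : L →ₗ[R] L →ₗ[R] L) (θ : L →ₗ[R] Derivation R A A)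
    (φ : L →ₗ[A] A) (α β : L) (a : A) (hθA : θ (a • β) (φ α) = a * θ β (φ α))
    (hd : θ α (φ (a • β)) - θ (a • β) (φ α) - φ (br α (a • β)) =
      a * (θ α (φ β) - θ β (φ α) - φ (br α β))) :
    φ (br α (a • β)) = a * φ (br α β) + θ α a * φ β := by
  rw [map_smul, smul_eq_mul, Derivation.leibniz, hθA, smul_eq_mul, smul_eq_mul] at hd
  linear_combination -hd

end

theorem lieRinehart_axiom_of_descent_general {R A L : Type*} [CommRing R] [CommRing A] [Algebra R A]
    [AddCommGroup L] [Module R L] [Module A L]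
    (br : L →ₗ[R] L →ₗ[R] L)
    (θ : L →ₗ[R] Derivation R A A)
    (hθA : ∀ (a : A) (α : L) (b : A), θ (a • α) b = a * θ α b)
    (hinj : Function.Injective (Module.Dual.eval A L))
    (hd : ∀ (φ : L →ₗ[A] A) (α β : L) (a : A),
        θ α (φ (a • β)) - θ (a • β) (φ α) - φ (br α (a • β)) =
          a * (θ α (φ β) - θ β (φ α) - φ (br α β)))
    (α β : L) (a : A) :
    br α (a • β) = a • br α β + θ α a • β := by
  refine hinj (LinearMap.ext fun φ => ?_)
  simpa only [LinearMap.add_apply, LinearMap.smul_apply, Module.Dual.eval_apply, map_add,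
    map_smul, smul_eq_mul] using
    dual_apply_bracket_smul_right br θ φ α β a (hθA a β (φ α)) (hd φ α β a)

/-- If the canonical map from `L` to its double `A`-dual is injective, `θ(aα) = a θ(α)`,
and for every `A`-linear `φ : L → A` the 2-form
`dφ(α,β) = θ(α)(φ(β)) − θ(β)(φ(α)) − φ(⁅α,β⁆)` is `A`-linear in the second argument,
then the Lie–Rinehart axiom `⁅α, aβ⁆ = a⁅α,β⁆ + θ(α)(a) β` holds. -/
theorem lieRinehart_axiom_of_descent {R A L : Type*} [CommRing R] [CommRing A] [Algebra R A]
    [AddCommGroup L] [Module R L] [Module A L] [IsScalarTower R A L]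
    (br : L →ₗ[R] L →ₗ[R] L) (hbr : ∀ x : L, br x x = 0)
    (θ : L →ₗ[R] Derivation R A A)
    (hθA : ∀ (a : A) (α : L) (b : A), θ (a • α) b = a * θ α b)
    (hinj : Function.Injective (Module.Dual.eval A L))
    (hd : ∀ (φ : L →ₗ[A] A) (α β : L) (a : A),
        θ α (φ (a • β)) - θ (a • β) (φ α) - φ (br α (a • β)) =
          a * (θ α (φ β) - θ β (φ α) - φ (br α β)))
    (α β : L) (a : A) :
    br α (a • β) = a • br α β + θ α a • β :=
  lieRinehart_axiom_of_descent_general br θ hθA hinj hd α β a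
end

section
/- Let R be a commutative ring, A a commutative R-algebra, and L an A-module such that the canonical double-dual map L → Hom_A(Hom_A(L,A), A) is injective. Suppose (⁅·,·⁆, θ) and (⁅·,·⁆', θ') are two Lie–Rinehart algebra structures on (A, L) whose CCE operators agree in degrees 0 and 1, that is: θ(α)(a) = θ'(α)(a) for all α ∈ L and a ∈ A, and for every A-linear φ : L → A and all α, β ∈ L, θ(α)(φ(β)) − θ(β)(φ(α)) − φ(⁅α,β⁆) = θ'(α)(φ(β)) − θ'(β)(φ(α)) − φ(⁅α,β⁆'). Then the two structures coincide: θ = θ' and ⁅α,β⁆ = ⁅α,β⁆' for all α, β ∈ L. -/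
/-!
Agreement in degree 0 says that the anchors coincide. Substituting `θ = θ'` into the
agreement in degree 1 cancels the anchor terms and leaves `φ ⁅α, β⁆ = φ ⁅α, β⁆'` for every
`φ ∈ Hom_A(L, A)`; injectivity of `L → L**` then identifies the brackets.
-/

theorem Module.Dual.eq_of_forall_apply_eq_of_injective_eval {A L : Type*} [CommSemiring A]
    [AddCommMonoid L] [Module A L] (hinj : Function.Injective (Module.Dual.eval A L)) {x y : L}
    (h : ∀ φ : Module.Dual A L, φ x = φ y) : x = y :=
  hinj (LinearMap.ext h)

theorem dual_apply_bracket_eq_of_anchor_eq {R A L : Type*} [CommRing R] [CommRing A]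
    [Algebra R A] [AddCommGroup L] [Module R L] [Module A L]
    {br br' : L →ₗ[R] L →ₗ[R] L} {θ θ' : L →ₗ[R] Derivation R A A}
    (h0 : ∀ (α : L) (a : A), θ α a = θ' α a)
    (h1 : ∀ (φ : L →ₗ[A] A) (α β : L),
        θ α (φ β) - θ β (φ α) - φ (br α β) = θ' α (φ β) - θ' β (φ α) - φ (br' α β))
    (φ : L →ₗ[A] A) (α β : L) : φ (br α β) = φ (br' α β) := by
  have h := h1 φ α β
  rw [h0 α (φ β), h0 β (φ α)] at h
  linear_combination -h

theorem lieRinehart_structure_unique_general {R A L : Type*} [CommRing R] [CommRing A] [Algebra R A]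
    [AddCommGroup L] [Module R L] [Module A L]
    (hinj : Function.Injective (Module.Dual.eval A L))
    (br br' : L →ₗ[R] L →ₗ[R] L) (θ θ' : L →ₗ[R] Derivation R A A)
    -- agreement of the CCE operators in degree 0
    (h0 : ∀ (α : L) (a : A), θ α a = θ' α a)
    -- agreement of the CCE operators in degree 1
    (h1 : ∀ (φ : L →ₗ[A] A) (α β : L),
        θ α (φ β) - θ β (φ α) - φ (br α β) =
          θ' α (φ β) - θ' β (φ α) - φ (br' α β)) :
    θ = θ' ∧ ∀ α β : L, br α β = br' α β :=
  ⟨LinearMap.ext fun α => Derivation.ext (h0 α), fun α β =>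
    Module.Dual.eq_of_forall_apply_eq_of_injective_eval hinj
      (dual_apply_bracket_eq_of_anchor_eq h0 h1 · α β)⟩

/-- If the canonical map from `L` to its double `A`-dual is injective, two Lie–Rinehart
algebra structures `(⁅·,·⁆, θ)` and `(⁅·,·⁆', θ')` on `(A, L)` whose CCE operators agree
in degrees `0` and `1` coincide. -/
theorem lieRinehart_structure_unique {R A L : Type*} [CommRing R] [CommRing A] [Algebra R A]
    [AddCommGroup L] [Module R L] [Module A L] [IsScalarTower R A L]
    (hinj : Function.Injective (Module.Dual.eval A L))
    (br br' : L →ₗ[R] L →ₗ[R] L) (θ θ' : L →ₗ[R] Derivation R A A)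
    -- the Lie–Rinehart axioms for `(br, θ)`
    (halt : ∀ x : L, br x x = 0)
    (hjac : ∀ x y z : L, br (br x y) z + br (br y z) x + br (br z x) y = 0)
    (hθA : ∀ (a : A) (α : L) (b : A), θ (a • α) b = a * θ α b)
    (hcompat : ∀ α β : L, θ (br α β) = ⁅θ α, θ β⁆)
    (hleib : ∀ (α β : L) (a : A), br α (a • β) = a • br α β + θ α a • β)
    -- the Lie–Rinehart axioms for `(br', θ')`
    (halt' : ∀ x : L, br' x x = 0)
    (hjac' : ∀ x y z : L, br' (br' x y) z + br' (br' y z) x + br' (br' z x) y = 0)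
    (hθA' : ∀ (a : A) (α : L) (b : A), θ' (a • α) b = a * θ' α b)
    (hcompat' : ∀ α β : L, θ' (br' α β) = ⁅θ' α, θ' β⁆)
    (hleib' : ∀ (α β : L) (a : A), br' α (a • β) = a • br' α β + θ' α a • β)
    -- agreement of the CCE operators in degree 0
    (h0 : ∀ (α : L) (a : A), θ α a = θ' α a)
    -- agreement of the CCE operators in degree 1
    (h1 : ∀ (φ : L →ₗ[A] A) (α β : L),
        θ α (φ β) - θ β (φ α) - φ (br α β) =
          θ' α (φ β) - θ' β (φ α) - φ (br' α β)) :
    θ = θ' ∧ ∀ α β : L, br α β = br' α β :=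
  lieRinehart_structure_unique_general hinj br br' θ θ' h0 h1
end

section
/- Let R be a commutative ring, A a commutative R-algebra, L an A-module with an R-bilinear alternating bracket ⁅·,·⁆, and θ : L → Der_R(A) an R-linear map. Suppose the canonical double-dual map L → Hom_A(Hom_A(L,A), A) is injective, and suppose the following low-degree conditions hold: (i) for every a ∈ A the 1-form α ↦ θ(α)(a) is A-linear; (ii) for all a ∈ A and α, β ∈ L, θ(α)(θ(β)(a)) − θ(β)(θ(α)(a)) − θ(⁅α,β⁆)(a) = 0; (iii) for every A-linear φ : L → A, the 2-form dφ given by (dφ)(α,β) = θ(α)(φ(β)) − θ(β)(φ(α)) − φ(⁅α,β⁆) is A-linear in each argument; (iv) for every A-linear φ : L → A, the 3-form d(dφ) vanishes identically. Then (A, L, ⁅·,·⁆, θ) is a Lie–Rinehart algebra: ⁅·,·⁆ satisfies the Jacobi identity, θ(aα) = a·θ(α), θ(⁅α,β⁆) = ⁅θ(α),θ(β)⁆, and ⁅α, aβ⁆ = a⁅α,β⁆ + θ(α)(a)·β. -/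
theorem Module.eq_of_forall_dual_apply_eq {A L : Type*} [CommRing A] [AddCommGroup L] [Module A L]
    (hinj : Function.Injective (Module.Dual.eval A L)) {u v : L}
    (h : ∀ φ : Module.Dual A L, φ u = φ v) : u = v :=
  hinj (LinearMap.ext h)

section CCE

variable {R A L : Type*} [CommRing R] [CommRing A] [Algebra R A]
  (θ : L → Derivation R A A) (br : L → L → L)

theorem cce_one_apply (f : (Fin 1 → L) → A) (v : Fin 2 → L) :
    cce θ br f v = θ (v 0) (f fun _ => v 1) - θ (v 1) (f fun _ => v 0)
      - f (fun _ => br (v 0) (v 1)) := by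
  have e0 : v ∘ Fin.succ = fun _ => v 1 := by ext i; fin_cases i; rfl
  have e1 : v ∘ (1 : Fin 2).succAbove = fun _ => v 0 := by ext i; fin_cases i; rfl
  have e2 : Function.update v 0 (br (v 0) (v 1)) ∘ (1 : Fin 2).succAbove
      = fun _ => br (v 0) (v 1) := by ext i; fin_cases i; rfl
  simp [cce, Fin.sum_univ_two, e0, e1, e2]
  ring

theorem cce_two_apply (g : (Fin 2 → L) → A) (x : Fin 3 → L) :
    cce θ br g x = θ (x 0) (g ![x 1, x 2]) - θ (x 1) (g ![x 0, x 2]) + θ (x 2) (g ![x 0, x 1])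
      - g ![br (x 0) (x 1), x 2] + g ![br (x 0) (x 2), x 1] + g ![x 0, br (x 1) (x 2)] := by
  have e0 : x ∘ Fin.succ = ![x 1, x 2] := by ext i; fin_cases i <;> rfl
  have e1 : x ∘ (1 : Fin 3).succAbove = ![x 0, x 2] := by ext i; fin_cases i <;> rfl
  have e2 : x ∘ (2 : Fin 3).succAbove = ![x 0, x 1] := by ext i; fin_cases i <;> rfl
  have e01 : Function.update x 0 (br (x 0) (x 1)) ∘ (1 : Fin 3).succAbove
      = ![br (x 0) (x 1), x 2] := by ext i; fin_cases i <;> rfl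
  have e02 : Function.update x 0 (br (x 0) (x 2)) ∘ (2 : Fin 3).succAbove
      = ![br (x 0) (x 2), x 1] := by ext i; fin_cases i <;> rfl
  have e12 : Function.update x 1 (br (x 1) (x 2)) ∘ (2 : Fin 3).succAbove
      = ![x 0, br (x 1) (x 2)] := by ext i; fin_cases i <;> rfl
  simp [cce, Fin.sum_univ_three, e0, e1, e2, e01, e02, e12]
  ring

theorem cce_cce_apply [AddCommGroup L] {F : Type*} [FunLike F L A] [AddMonoidHomClass F L A]
    (hθ : ∀ u v, θ (br u v) = ⁅θ u, θ v⁆) (φ : F) (x y z : L) :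
    cce θ br (cce θ br fun t : Fin 1 → L => φ (t 0)) ![x, y, z] =
      φ (br (br x y) z - br (br x z) y - br x (br y z)) := by
  simp only [cce_two_apply, cce_one_apply, Matrix.cons_val_zero, Matrix.cons_val_one,
    Matrix.cons_val_two, Matrix.head_cons, Matrix.tail_cons, map_sub, hθ,
    Derivation.commutator_apply]
  ring

end CCE

theorem dual_apply_br_smul {R A L : Type*} [CommRing R] [CommRing A] [Algebra R A]
    [AddCommGroup L] [Module A L] (br : L → L → L) (θ : L → Derivation R A A)
    (hθ : ∀ (a c : A) (α : L), θ (c • α) a = c * θ α a) (φ : Module.Dual A L) (α β : L) (a : A)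
    (hdφ : θ α (φ (a • β)) - θ (a • β) (φ α) - φ (br α (a • β)) =
      a * (θ α (φ β) - θ β (φ α) - φ (br α β))) :
    φ (br α (a • β)) = a * φ (br α β) + θ α a * φ β := by
  rw [map_smul, smul_eq_mul, Derivation.leibniz, hθ] at hdφ
  simp only [smul_eq_mul] at hdφ
  linear_combination -hdφ

/-- Low-degree conditions on the CCE data imply the full Lie–Rinehart axioms, provided
the canonical map from `L` to its double `A`-dual is injective. -/
theorem lieRinehart_of_low_degree {R A L : Type*} [CommRing R] [CommRing A] [Algebra R A]
    [AddCommGroup L] [Module R L] [Module A L] [IsScalarTower R A L]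
    (br : L →ₗ[R] L →ₗ[R] L) (hbr : ∀ x : L, br x x = 0)
    (θ : L →ₗ[R] Derivation R A A)
    (hinj : Function.Injective (Module.Dual.eval A L))
    -- (i) for every `a ∈ A` the 1-form `α ↦ θ(α)(a)` is `A`-linear
    (h1 : ∀ (a c : A) (α : L), θ (c • α) a = c * θ α a)
    -- (ii) `θ` is compatible with the brackets on 0-forms
    (h2 : ∀ (a : A) (α β : L), θ α (θ β a) - θ β (θ α a) - θ (br α β) a = 0)
    -- (iii) for every `A`-linear `φ : L → A` the 2-form `dφ` is `A`-linear in each argument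
    (h3 : ∀ (φ : L →ₗ[A] A) (α β : L) (c : A),
        (θ (c • α) (φ β) - θ β (φ (c • α)) - φ (br (c • α) β) =
            c * (θ α (φ β) - θ β (φ α) - φ (br α β))) ∧
          (θ α (φ (c • β)) - θ (c • β) (φ α) - φ (br α (c • β)) =
            c * (θ α (φ β) - θ β (φ α) - φ (br α β))))
    -- (iv) for every `A`-linear `φ : L → A` the 3-form `d(dφ)` vanishes identically
    (h4 : ∀ (φ : L →ₗ[A] A) (x : Fin 3 → L),
        cce (fun z => θ z) (fun u v => br u v)
          (cce (fun z => θ z) (fun u v => br u v) (fun t : Fin 1 → L => φ (t 0))) x = 0) :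
    (∀ x y z : L, br (br x y) z + br (br y z) x + br (br z x) y = 0) ∧
      (∀ (a : A) (α : L) (b : A), θ (a • α) b = a * θ α b) ∧
      (∀ α β : L, θ (br α β) = ⁅θ α, θ β⁆) ∧
      (∀ (α β : L) (a : A), br α (a • β) = a • br α β + θ α a • β) := by
  have anchor : ∀ α β : L, θ (br α β) = ⁅θ α, θ β⁆ := fun α β => by
    ext a
    rw [Derivation.commutator_apply]
    linear_combination -h2 a α β
  refine ⟨fun x y z => ?_, fun a α b => h1 b a α, anchor, fun α β a => ?_⟩
  · have jacobiator : br (br x y) z - br (br x z) y - br x (br y z) = 0 :=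
      Module.eq_of_forall_dual_apply_eq hinj fun φ => by
        rw [map_zero, ← cce_cce_apply _ _ anchor, h4]
    rw [← LinearMap.IsAlt.neg hbr x, ← LinearMap.IsAlt.neg hbr x z, map_neg,
      LinearMap.neg_apply, ← jacobiator]
    abel
  · refine Module.eq_of_forall_dual_apply_eq hinj fun φ => ?_
    rw [dual_apply_br_smul (fun u v => br u v) _ h1 φ α β a (h3 φ α β a).2]
    simp only [map_add, map_smul, smul_eq_mul]
end
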